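/- For the Hurdle function with hurdle width w, if z = kw is a local optimum with k ≥ 1, then among all z' with h(z') > h(kw), the value z' = (k-1)w is the one of smallest distance |z - z'|; equivalently, h(z') > h(kw) and z' > (k-1)w together with z' ≤ kw is impossible. -/

import Mathlib

/-- The Hurdle fitness as a function of the number of zeros `z`,
with hurdle width `w`. -/
noncomputable def hurdle (w z : ℕ) : ℝ :=
  -(⌈(z : ℝ) / w⌉ : ℝ) - ((z % w : ℕ) : ℝ) / w

/-! On `((k - 1) * w, k * w]` the ceiling term of `hurdle` is constant equal to `-k`, and the
remainder term can only lower the value further; at `k * w` the remainder vanishes. -/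

theorem hurdle_le_neg_ceil (w z : ℕ) : hurdle w z ≤ -⌈(z : ℝ) / w⌉ := by
  have : (0 : ℝ) ≤ ((z % w : ℕ) : ℝ) / w := by positivity
  unfold hurdle
  linarith

theorem hurdle_mul_width (k : ℕ) {w : ℕ} (hw : w ≠ 0) : hurdle w (k * w) = -k := by
  have hw' : (w : ℝ) ≠ 0 := Nat.cast_ne_zero.mpr hw
  simp [hurdle, Nat.mul_mod_left, hw']

theorem ceil_natCast_div_eq {w k z : ℕ} (hlo : (k - 1) * w < z) (hhi : z ≤ k * w) :
    ⌈(z : ℝ) / w⌉ = k := by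
  have hk : 1 ≤ k := by
    by_contra! hk
    interval_cases k
    omega
  have hw : (0 : ℝ) < w := by
    rcases Nat.eq_zero_or_pos w with rfl | hw
    · omega
    · exact_mod_cast hw
  have hlo' : ((k : ℝ) - 1) * w < z := by exact_mod_cast hlo
  have hhi' : (z : ℝ) ≤ k * w := by exact_mod_cast hhi
  rw [Int.ceil_eq_iff, Int.cast_natCast, lt_div_iff₀ hw, div_le_iff₀ hw]
  exact ⟨hlo', hhi'⟩

theorem hurdle_le_of_lt_of_le {w k z : ℕ} (hlo : (k - 1) * w < z) (hhi : z ≤ k * w) :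
    hurdle w z ≤ hurdle w (k * w) := by
  have hw : w ≠ 0 := by
    rintro rfl
    omega
  have := hurdle_le_neg_ceil w z
  rw [ceil_natCast_div_eq hlo hhi, Int.cast_natCast] at this
  rwa [hurdle_mul_width k hw]

theorem stmt_6_general (w k : ℕ) :
    ∀ z' : ℕ, hurdle w z' > hurdle w (k * w) → (k - 1) * w < z' → z' ≤ k * w → False :=
  fun _ hgt hlo hhi => (hurdle_le_of_lt_of_le hlo hhi).not_gt hgt

theorem stmt_6 (w k : ℕ) (hw : 2 ≤ w) (hk : 1 ≤ k) :
    ∀ z' : ℕ, hurdle w z' > hurdle w (k * w) → (k - 1) * w < z' → z' ≤ k * w → False :=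
  stmt_6_general w k
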